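/- arXiv:1302.2675 — 2 statements merged into one kernel-verified Lean document; each statement's English description precedes it below -/
import Mathlib

section
/- The labeling λ^k is legal (every ⊥-labeled node is finite in G') if and only if k is an F-finite level of G (every F-node after level k is finite in G'). -/
/-- Strict lexicographic order on finite 0-1 profiles. -/
def ProfLt (a b : List Bool) : Prop := List.Lex (· < ·) a b

/-- Non-strict lexicographic order on finite 0-1 profiles. -/
def ProfLe (a b : List Bool) : Prop := a = b ∨ ProfLt a b

/-- A nondeterministic Büchi automaton on infinite words. -/
structure NBW (Q : Type) (σ : Type) where
  init : Set Q
  trans : Q → σ → Set Q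
  acc : Q → Bool

namespace NBW

variable {Q σ : Type} (A : NBW Q σ) (w : ℕ → σ)

/-- `(q,i)` is a vertex of the run DAG of `A` on `w`. -/
def InDag (v : Q × ℕ) : Prop :=
  ∃ p : ℕ → Q, p 0 ∈ A.init ∧ (∀ j, j < v.2 → p (j + 1) ∈ A.trans (p j) (w j)) ∧ p v.2 = v.1

/-- Edge of the run DAG. -/
def Edge (u v : Q × ℕ) : Prop :=
  A.InDag w u ∧ v.2 = u.2 + 1 ∧ v.1 ∈ A.trans u.1 (w u.2)

/-- An infinite initial path through the (sub-)DAG with edge relation `E`. -/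
def IsPath (E : Q × ℕ → Q × ℕ → Prop) (π : ℕ → Q × ℕ) : Prop :=
  (π 0).1 ∈ A.init ∧ (π 0).2 = 0 ∧ ∀ i, E (π i) (π (i + 1))

/-- An accepting path: initial and visiting F-nodes infinitely often. -/
def AcceptingPath (E : Q × ℕ → Q × ℕ → Prop) (π : ℕ → Q × ℕ) : Prop :=
  A.IsPath E π ∧ ∀ N, ∃ i, N ≤ i ∧ A.acc (π i).1 = true

/-- Profile (sequence of acceptance labels) of the first `i+1` states of `p`. -/
def profileOf (p : ℕ → Q) (i : ℕ) : List Bool :=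
  (List.range (i + 1)).map fun j => A.acc (p j)

/-- `p` encodes a finite initial run ending at node `v`. -/
def FinRunTo (p : ℕ → Q) (v : Q × ℕ) : Prop :=
  p 0 ∈ A.init ∧ (∀ j, j < v.2 → p (j + 1) ∈ A.trans (p j) (w j)) ∧ p v.2 = v.1

/-- `h` assigns to each node the lexicographically maximal profile
over all finite initial runs to it. -/
def IsProfileFun (h : Q × ℕ → List Bool) : Prop :=
  ∀ v, A.InDag w v →
    (∃ p, A.FinRunTo w p v ∧ A.profileOf p v.2 = h v) ∧
    ∀ p, A.FinRunTo w p v → ProfLe (A.profileOf p v.2) (h v)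

/-- Edges of the pruned DAG `G'`: only edges from predecessors of
lexicographically maximal profile are kept. -/
def Edge' (h : Q × ℕ → List Bool) (u v : Q × ℕ) : Prop :=
  A.Edge w u v ∧ ∀ u', A.Edge w u' v → ¬ ProfLt (h u) (h u')

/-- `v` is finite in `G'`: it has finitely many descendants in `G'`. -/
def FiniteIn' (h : Q × ℕ → List Bool) (v : Q × ℕ) : Prop :=
  Set.Finite {u | Relation.ReflTransGen (A.Edge' w h) v u}

/-- Vertices of `G''`: vertices of the run DAG that are not finite in `G'`. -/
def InDag'' (h : Q × ℕ → List Bool) (v : Q × ℕ) : Prop :=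
  A.InDag w v ∧ ¬ A.FiniteIn' w h v

/-- Edges of `G''`. -/
def Edge'' (h : Q × ℕ → List Bool) (u v : Q × ℕ) : Prop :=
  A.Edge' w h u v ∧ A.InDag'' w h u ∧ A.InDag'' w h v

/-- `lam` is the retrospective labeling `λ^k`: ⊤ at levels ≤ k, ⊥ on F-nodes
after level k, inherited along `G'`-edges otherwise. -/
def IsRetroLabeling (h : Q × ℕ → List Bool) (k : ℕ) (lam : Q × ℕ → Bool) : Prop :=
  (∀ u, A.InDag w u → u.2 ≤ k → lam u = true) ∧
  (∀ u, A.InDag w u → k < u.2 → A.acc u.1 = true → lam u = false) ∧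
  (∀ u v, k < v.2 → A.acc v.1 = false → A.Edge' w h u v → lam v = lam u)

/-- A labeling is legal when every ⊥-labeled node is finite in `G'`. -/
def Legal (h : Q × ℕ → List Bool) (lam : Q × ℕ → Bool) : Prop :=
  ∀ u, A.InDag w u → lam u = false → A.FiniteIn' w h u

/-- `α(u)`: the number of ⊤-labeled profile-equivalence classes on `u`'s level
whose profile is strictly greater than `h u`. -/
noncomputable def alphaCount (h : Q × ℕ → List Bool) (lam : Q × ℕ → Bool) (u : Q × ℕ) : ℕ :=
  Set.ncard {p : List Bool | ∃ v, A.InDag w v ∧ v.2 = u.2 ∧ lam v = true ∧ h v = p ∧ ProfLt (h u) p}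

/-- The `k`-retrospective ranking (with top rank `m`). -/
noncomputable def retroRank (h : Q × ℕ → List Bool) (lam : Q × ℕ → Bool) (k m : ℕ)
    (u : Q × ℕ) : ℕ :=
  if u.2 ≤ k then m
  else if lam u then 2 * A.alphaCount w h lam u + 1 else 2 * A.alphaCount w h lam u

/-- `m = 2 |Q \ F|`. -/
def mBound [Fintype Q] : ℕ :=
  2 * Finset.card (Finset.univ.filter fun q => A.acc q = false)

end NBW

/-!
`G'` keeps, for every node after level `0`, the edge from a parent of maximal profile, so each such
node has a `G'`-parent. Parents' profiles have the length of the level, hence a maximal one exists.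
Since a non-`F` node after level `k` inherits its label from its `G'`-parent, descending along
`G'`-parents from a `⊥`-labelled node reaches either an `F`-node after level `k` or level `k`,
which is labelled `⊤`. The descendants of a node are among those of its `G'`-parent.
-/

namespace NBW

variable {Q σ : Type} {A : NBW Q σ} {w : ℕ → σ} {h : Q × ℕ → List Bool}

theorem IsProfileFun.length_eq (hprof : A.IsProfileFun w h) {v : Q × ℕ} (hv : A.InDag w v) :
    (h v).length = v.2 + 1 := by
  obtain ⟨⟨p, -, hp⟩, -⟩ := hprof v hv
  simp [← hp, profileOf]

theorem InDag.exists_edge {v : Q × ℕ} (hv : A.InDag w v) {n : ℕ} (hn : v.2 = n + 1) :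
    ∃ u, A.Edge w u v := by
  obtain ⟨p, hp0, hstep, hpv⟩ := hv
  refine ⟨(p n, n), ⟨p, hp0, fun j hj => hstep j (by omega), rfl⟩, hn, ?_⟩
  simpa [← hpv, hn] using hstep n (by omega)

theorem IsProfileFun.exists_edge' (hprof : A.IsProfileFun w h) {v : Q × ℕ} (hv : A.InDag w v)
    {n : ℕ} (hn : v.2 = n + 1) : ∃ u, A.Edge' w h u v := by
  obtain ⟨u₀, hu₀⟩ := hv.exists_edge hn
  have hfin : (h '' {u | A.Edge w u v}).Finite := by
    refine (List.finite_length_eq Bool (n + 1)).subset ?_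
    rintro _ ⟨u, hu, rfl⟩
    have := hu.2.1
    simp only [Set.mem_ofPred_eq, hprof.length_eq hu.1]
    omega
  obtain ⟨u, hu, hmax⟩ := Set.Finite.exists_maximalFor' h _ hfin ⟨u₀, hu₀⟩
  exact ⟨u, hu, fun u' hu' (hlt : h u < h u') => (hmax hu' hlt.le).not_gt hlt⟩

theorem FiniteIn'.of_edge' {u v : Q × ℕ} (hu : A.FiniteIn' w h u) (huv : A.Edge' w h u v) :
    A.FiniteIn' w h v :=
  hu.subset fun _ hx => .head huv hx

theorem IsRetroLabeling.legal (hprof : A.IsProfileFun w h) {k : ℕ} {lam : Q × ℕ → Bool}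
    (hlam : A.IsRetroLabeling w h k lam)
    (hfin : ∀ v, A.InDag w v → A.acc v.1 = true → k < v.2 → A.FiniteIn' w h v) :
    A.Legal w h lam := by
  obtain ⟨htop, -, hinherit⟩ := hlam
  suffices ∀ n u, u.2 = n → A.InDag w u → lam u = false → A.FiniteIn' w h u from
    fun u => this u.2 u rfl
  intro n
  induction n with
  | zero => intro u hu0 hu hlamu; simp [htop u hu (by omega)] at hlamu
  | succ m ih =>
    intro u hun hu hlamu
    by_cases hk : u.2 ≤ k
    · simp [htop u hu hk] at hlamu
    cases hacc : A.acc u.1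
    · obtain ⟨p, hp⟩ := hprof.exists_edge' hu hun
      refine (ih p (by have := hp.1.2.1; omega) hp.1.1 ?_).of_edge' hp
      rwa [← hinherit p u (by omega) hacc hp]
    · exact hfin u hu hacc (by omega)

end NBW

/-- `λ^k` is legal iff `k` is an F-finite level of `G`. -/
theorem stmt11 {Q σ : Type} (A : NBW Q σ) (w : ℕ → σ) (h : Q × ℕ → List Bool)
    (hprof : A.IsProfileFun w h) (k : ℕ) (lam : Q × ℕ → Bool)
    (hlam : A.IsRetroLabeling w h k lam) :
    A.Legal w h lam ↔
    (∀ v, A.InDag w v → A.acc v.1 = true → k < v.2 → A.FiniteIn' w h v) :=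
  ⟨fun hleg v hv hacc hk => hleg v hv (hlam.2.1 v hv hk hacc), hlam.legal hprof⟩
end

section
/- A run DAG G is rejecting if and only if there exists k ∈ ℕ such that the labeling λ^k is legal. -/
/-!
Both sides are equivalent to: the subgraph `G''` of nodes with infinitely many `G'`-descendants
contains `F`-nodes on infinitely many levels.

Along a `G'`-edge `u → v` the maximal profile grows by one letter, `h v = h u ++ [F(v)]`, so every
`G'`-path from level 0 carries its own profile. If `λ^k` is legal, no `F`-node of `G''` lies beyond
level `k`, since it would be labelled `⊥`; conversely, if none does, labelling a node `⊥` exactly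
when its maximal profile has an `F` after position `k` is a legal `λ^k`.

Given an accepting run, Kőnig's lemma yields an infinite `G'`-path through nodes of
lexicographically maximal profile among the nodes on accepting runs. It meets `F` infinitely often:
otherwise an accepting run through one of its nodes would overtake its profile at the next `F`.

Conversely, the profiles of `G''`-nodes form a tree of width at most `|Q|` in which every node has
a child, so beyond some level `L` every branch is determined by its first `L + 1` letters. One of
these finitely many branches passes through `F`-nodes of `G''` on infinitely many levels, and
Kőnig's lemma turns it into an accepting `G'`-path.
-/

open Filter

namespace List

variable {α : Type*}

theorem append_lt_append_of_lt [LT α] {l₁ l₂ : List α} (hl : l₁.length = l₂.length)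
    (h : l₁ < l₂) (m₁ m₂ : List α) : l₁ ++ m₁ < l₂ ++ m₂ := by
  induction l₁ generalizing l₂ with
  | nil => cases l₂ <;> simp_all
  | cons a l₁ ih =>
    cases l₂ with
    | nil => simp at hl
    | cons b l₂ =>
      rw [cons_lt_cons_iff] at h
      rcases h with hab | ⟨rfl, h⟩
      · exact Lex.rel hab
      · exact Lex.cons (ih (by simpa using hl) h)

variable [LinearOrder α] {l₁ l₂ : List α} {a b : α}

theorem concat_lt_concat (hl : l₁.length = l₂.length) (h : l₁ ≤ l₂) (hab : a < b) :
    l₁ ++ [a] < l₂ ++ [b] := by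
  rcases h.lt_or_eq with h | rfl
  · exact append_lt_append_of_lt hl h _ _
  · exact append_left_lt (Lex.rel hab)

theorem concat_le_concat (hl : l₁.length = l₂.length) (h : l₁ ≤ l₂) (hab : a ≤ b) :
    l₁ ++ [a] ≤ l₂ ++ [b] := by
  rcases hab.lt_or_eq with hab | rfl
  · exact (concat_lt_concat hl h hab).le
  rcases h.lt_or_eq with h | rfl
  · exact (append_lt_append_of_lt hl h _ _).le
  · exact le_rfl

end List

theorem exists_seq_of_forall_mem_exists_pred {X : Type*} (W : ℕ → Set X) (R : X → X → Prop)
    (hfin : ∀ n, (W n).Finite) (hne : ∀ n, (W n).Nonempty)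
    (hpred : ∀ n, ∀ v ∈ W (n + 1), ∃ u ∈ W n, R u v) :
    ∃ x : ℕ → X, (∀ n, x n ∈ W n) ∧ ∀ n, R (x n) (x (n + 1)) := by
  choose pred hpredW hpredR using hpred
  have (n : ℕ) : Finite (W n) := (hfin n).to_subtype
  have (n : ℕ) : Nonempty (W n) := (hne n).to_subtype
  let step (k : ℕ) (v : W (k + 1)) : W k := ⟨pred k v v.2, hpredW k v v.2⟩
  obtain ⟨x, hx⟩ := exists_seq_forall_proj_of_forall_finite
    (fun {i j} (hij : i ≤ j) (a : W j) =>
      Nat.decreasingInduction (motive := fun m _ => W m) (fun k _ => step k) a hij)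
    (fun _ _ => Nat.decreasingInduction_self _ _)
    (fun _ _ _ hij hjk _ =>
      (Nat.decreasingInduction_trans (motive := fun m _ => W m) hij hjk (fun k _ => step k) _).symm)
    (fun n _ => Set.toFinite _)
  refine ⟨fun n => x n, fun n => (x n).2, fun n => ?_⟩
  have hstep : step n (x (n + 1)) = x n := by
    simpa using hx (Nat.le_succ n)
  simpa only [← hstep] using hpredR n _ (x (n + 1)).2

theorem exists_forall_injOn_of_image_eq {β : Type*} {S : ℕ → Set β} {f : β → β}
    (himage : ∀ n, f '' S (n + 1) = S n) (hfin : ∀ n, (S n).Finite) {B : ℕ}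
    (hB : ∀ n, (S n).ncard ≤ B) : ∃ L, ∀ n, L ≤ n → Set.InjOn f (S (n + 1)) := by
  have hmono : Monotone fun n => (S n).ncard := monotone_nat_of_le_succ fun n => by
    simpa only [← himage n] using Set.ncard_image_le (hfin (n + 1))
  have hbdd : BddAbove (Set.range fun n => (S n).ncard) := ⟨B, Set.forall_mem_range.mpr hB⟩
  obtain ⟨L, hL⟩ := Nat.sSup_mem (Set.range_nonempty _) hbdd
  refine ⟨L, fun n hn => Set.injOn_of_ncard_image_eq ?_ (hfin (n + 1))⟩
  refine le_antisymm (Set.ncard_image_le (hfin (n + 1))) ?_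
  calc (S (n + 1)).ncard ≤ sSup (Set.range fun n => (S n).ncard) := le_csSup hbdd ⟨n + 1, rfl⟩
    _ = (S L).ncard := hL.symm
    _ ≤ (S n).ncard := hmono hn
    _ = (f '' S (n + 1)).ncard := by rw [himage]

theorem List.eq_of_take_eq_of_injOn_dropLast {β : Type*} {S : ℕ → Set (List β)}
    (hlen : ∀ n, ∀ s ∈ S n, s.length = n + 1) (himage : ∀ n, List.dropLast '' S (n + 1) = S n)
    {L : ℕ} (hinj : ∀ n, L ≤ n → Set.InjOn List.dropLast (S (n + 1))) {n : ℕ} (hn : L ≤ n)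
    {s t : List β} (hs : s ∈ S n) (ht : t ∈ S n) (hst : s.take (L + 1) = t.take (L + 1)) :
    s = t := by
  induction n, hn using Nat.le_induction generalizing s t with
  | base =>
    rwa [List.take_of_length_le (hlen L s hs).le, List.take_of_length_le (hlen L t ht).le] at hst
  | succ n hn ih =>
    refine hinj n hn hs ht (ih (himage n ▸ ⟨s, hs, rfl⟩) (himage n ▸ ⟨t, ht, rfl⟩) ?_)
    rwa [List.dropLast_eq_take, List.dropLast_eq_take, List.take_take, List.take_take,
      hlen _ s hs, hlen _ t ht, Nat.add_sub_cancel, min_eq_left (by omega)]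

namespace NBW

variable {Q σ : Type} {A : NBW Q σ} {w : ℕ → σ} {h : Q × ℕ → List Bool}

def IsRun (A : NBW Q σ) (w : ℕ → σ) (r : ℕ → Q) : Prop :=
  r 0 ∈ A.init ∧ ∀ j, r (j + 1) ∈ A.trans (r j) (w j)

def IsAcceptingRun (A : NBW Q σ) (w : ℕ → σ) (r : ℕ → Q) : Prop :=
  A.IsRun w r ∧ ∃ᶠ j in atTop, A.acc (r j) = true

theorem IsRun.inDag {r : ℕ → Q} (hr : A.IsRun w r) (n : ℕ) : A.InDag w (r n, n) :=
  ⟨r, hr.1, fun j _ => hr.2 j, rfl⟩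

theorem IsRun.edge {r : ℕ → Q} (hr : A.IsRun w r) (n : ℕ) :
    A.Edge w (r n, n) (r (n + 1), n + 1) :=
  ⟨hr.inDag n, rfl, hr.2 n⟩

theorem InDag.mem_init {v : Q × ℕ} (hv : A.InDag w v) (h0 : v.2 = 0) : v.1 ∈ A.init := by
  obtain ⟨p, hp0, -, hpv⟩ := hv
  rw [← hpv, h0]
  exact hp0

theorem isRun_of_edge {x : ℕ → Q × ℕ} (hlev : ∀ n, (x n).2 = n)
    (hx : ∀ n, A.Edge w (x n) (x (n + 1))) : A.IsRun w fun n => (x n).1 :=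
  ⟨(hx 0).1.mem_init (hlev 0), fun n => by simpa only [hlev n] using (hx n).2.2⟩

theorem IsPath.snd_eq {π : ℕ → Q × ℕ} (hπ : A.IsPath (A.Edge w) π) (n : ℕ) : (π n).2 = n := by
  induction n with
  | zero => exact hπ.2.1
  | succ n ih => rw [(hπ.2.2 n).2.1, ih]

theorem exists_acceptingPath_iff_exists_isAcceptingRun :
    (∃ π, A.AcceptingPath (A.Edge w) π) ↔ ∃ r, A.IsAcceptingRun w r := by
  constructor
  · rintro ⟨π, hπ, hacc⟩
    exact ⟨_, isRun_of_edge hπ.snd_eq hπ.2.2, frequently_atTop.mpr hacc⟩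
  · rintro ⟨r, hr, hacc⟩
    exact ⟨fun n => (r n, n), ⟨hr.1, rfl, hr.edge⟩, frequently_atTop.mp hacc⟩

theorem profileOf_succ (p : ℕ → Q) (n : ℕ) :
    A.profileOf p (n + 1) = A.profileOf p n ++ [A.acc (p (n + 1))] := by
  simp [profileOf, List.range_succ]

theorem length_profileOf (p : ℕ → Q) (n : ℕ) : (A.profileOf p n).length = n + 1 := by
  simp [profileOf]

theorem profileOf_congr {p q : ℕ → Q} {n : ℕ} (hpq : ∀ j ≤ n, p j = q j) :
    A.profileOf p n = A.profileOf q n :=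
  List.map_congr_left fun j hj => by rw [hpq j (by simpa [Nat.lt_succ_iff] using hj)]

theorem FinRunTo.update {p : ℕ → Q} {u v : Q × ℕ} (hp : A.FinRunTo w p u)
    (he : A.Edge w u v) :
    A.FinRunTo w (Function.update p v.2 v.1) v ∧
      A.profileOf (Function.update p v.2 v.1) v.2 = A.profileOf p u.2 ++ [A.acc v.1] := by
  obtain ⟨q, _⟩ := v
  obtain ⟨-, rfl, htrans⟩ := he
  obtain ⟨hp0, hpt, hpu⟩ := hp
  refine ⟨⟨by simpa using hp0, fun j hj => ?_, by simp⟩, ?_⟩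
  · rcases (Nat.lt_succ_iff_lt_or_eq.mp hj) with hj | rfl
    · simpa [Function.update_of_ne (show j + 1 ≠ u.2 + 1 by omega),
        Function.update_of_ne (show j ≠ u.2 + 1 by omega)] using hpt j hj
    · simpa [hpu] using htrans
  · rw [profileOf_succ, profileOf_congr (q := p) fun j hj => Function.update_of_ne (by omega) _ _]
    simp

theorem Edge.inDag_right {u v : Q × ℕ} (he : A.Edge w u v) : A.InDag w v := by
  obtain ⟨p, hp⟩ : ∃ p, A.FinRunTo w p u := he.1
  exact ⟨_, (hp.update he).1⟩

namespace IsProfileFun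

variable (hprof : A.IsProfileFun w h)
include hprof

theorem length_eq_s12 {v : Q × ℕ} (hv : A.InDag w v) : (h v).length = v.2 + 1 := by
  obtain ⟨p, -, hpv⟩ := (hprof v hv).1
  simp [← hpv, profileOf]

theorem getElem?_eq {v : Q × ℕ} (hv : A.InDag w v) : (h v)[v.2]? = some (A.acc v.1) := by
  obtain ⟨p, ⟨-, -, hpv⟩, hp⟩ := (hprof v hv).1
  simp [← hp, profileOf, hpv]

theorem profileOf_le {p : ℕ → Q} {v : Q × ℕ} (hp : A.FinRunTo w p v) :
    A.profileOf p v.2 ≤ h v :=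
  le_iff_eq_or_lt.mpr ((hprof v ⟨p, hp⟩).2 p hp)

theorem concat_le_of_edge {u v : Q × ℕ} (he : A.Edge w u v) : h u ++ [A.acc v.1] ≤ h v := by
  obtain ⟨p, hp, hpu⟩ := (hprof u he.1).1
  obtain ⟨hp', hprofile⟩ := hp.update he
  rw [← hpu, ← hprofile]
  exact hprof.profileOf_le hp'

theorem eq_concat_of_edge' {u v : Q × ℕ} (he : A.Edge' w h u v) : h v = h u ++ [A.acc v.1] := by
  refine le_antisymm ?_ (hprof.concat_le_of_edge he.1)
  obtain ⟨p, hp, hpv⟩ := (hprof v he.1.inDag_right).1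
  have hlev : v.2 = u.2 + 1 := he.1.2.1
  have hp' : A.FinRunTo w p (p u.2, u.2) := ⟨hp.1, fun j hj => hp.2.1 j (by omega), rfl⟩
  have he' : A.Edge w (p u.2, u.2) v := by
    refine ⟨⟨p, hp'⟩, hlev, ?_⟩
    simpa [← hlev, hp.2.2] using hp.2.1 u.2 (by omega)
  calc h v = A.profileOf p u.2 ++ [A.acc v.1] := by
        rw [← hpv, hlev, profileOf_succ, ← hlev, hp.2.2]
    _ ≤ h u ++ [A.acc v.1] := by
        refine List.concat_le_concat ?_ ?_ le_rfl
        · rw [hprof.length_eq_s12 he.1.1, length_profileOf]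
        · exact (hprof.profileOf_le hp').trans (not_lt.mp (he.2 _ he'))

end IsProfileFun

theorem finite_level [Finite Q] (n : ℕ) : {v : Q × ℕ | v.2 = n}.Finite :=
  (Set.finite_range fun q : Q => (q, n)).subset fun v hv => ⟨v.1, Prod.ext rfl hv.symm⟩

theorem exists_edge'_of_inDag [Finite Q] {v : Q × ℕ} (hv : A.InDag w v) (hn : v.2 ≠ 0) :
    ∃ u, A.Edge' w h u v := by
  obtain ⟨p, hp⟩ : ∃ p, A.FinRunTo w p v := hv
  have hpred : A.Edge w (p (v.2 - 1), v.2 - 1) v := by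
    refine ⟨⟨p, hp.1, fun j hj => hp.2.1 j (by omega), rfl⟩, by omega, ?_⟩
    simpa [Nat.sub_add_cancel (Nat.pos_of_ne_zero hn), hp.2.2] using hp.2.1 (v.2 - 1) (by omega)
  have hfin : {u | A.Edge w u v}.Finite :=
    (finite_level (v.2 - 1)).subset fun u hu => show u.2 = v.2 - 1 by rw [hu.2.1]; omega
  obtain ⟨u, hu, hmax⟩ := Set.exists_max_image _ h hfin ⟨_, hpred⟩
  exact ⟨u, hu, fun u' hu' => not_lt.mpr (hmax u' hu')⟩

theorem IsProfileFun.exists_ancestor [Finite Q] (hprof : A.IsProfileFun w h) {v : Q × ℕ}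
    (hv : A.InDag w v) {i : ℕ} (hi : i ≤ v.2) :
    ∃ u, A.InDag w u ∧ u.2 = i ∧ Relation.ReflTransGen (A.Edge' w h) u v ∧
      h u = (h v).take (i + 1) := by
  obtain ⟨n, hn⟩ : ∃ n, v.2 = n := ⟨_, rfl⟩
  rw [hn] at hi
  induction n, hi using Nat.le_induction generalizing v with
  | base =>
    exact ⟨v, hv, hn, .refl, by rw [List.take_of_length_le (hprof.length_eq_s12 hv ▸ hn ▸ le_rfl)]⟩
  | succ n hin ih =>
    obtain ⟨u', hu'⟩ := exists_edge'_of_inDag (h := h) hv (by omega)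
    have hu'lev : u'.2 = n := by have := hu'.1.2.1; omega
    obtain ⟨u, hu, hui, hu'u, hhu⟩ := ih hu'.1.1 hu'lev
    refine ⟨u, hu, hui, hu'u.tail hu', ?_⟩
    rw [hhu, hprof.eq_concat_of_edge' hu', List.take_append_of_le_length]
    rw [hprof.length_eq_s12 hu'.1.1]
    omega

theorem InDag''.of_reflTransGen {u v : Q × ℕ} (hu : A.InDag w u)
    (huv : Relation.ReflTransGen (A.Edge' w h) u v) (hv : A.InDag'' w h v) : A.InDag'' w h u :=
  ⟨hu, fun hfin => hv.2 (hfin.subset fun _ hx => huv.trans hx)⟩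

theorem InDag''.exists_edge' [Finite Q] {v : Q × ℕ} (hv : A.InDag'' w h v) :
    ∃ s, A.Edge' w h v s ∧ A.InDag'' w h s := by
  by_contra! hno
  have hsucc : {s | A.Edge' w h v s}.Finite :=
    (finite_level (v.2 + 1)).subset fun s hs => hs.1.2.1
  have hdesc : {x | Relation.ReflTransGen (A.Edge' w h) v x} ⊆
      insert v (⋃ s ∈ {s | A.Edge' w h v s}, {x | Relation.ReflTransGen (A.Edge' w h) s x}) := by
    intro x hx
    rcases hx.cases_head with rfl | ⟨s, hs, hsx⟩
    · exact Set.mem_insert _ _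
    · exact Set.mem_insert_of_mem v (Set.mem_biUnion hs hsx)
  refine hv.2 (((hsucc.biUnion fun s hs => ?_).insert v).subset hdesc)
  by_contra hinf
  exact hno s hs ⟨hs.1.inDag_right, hinf⟩

theorem inDag''_of_forall_edge' {x : ℕ → Q × ℕ} (hlev : ∀ n, (x n).2 = n)
    (hx : ∀ n, A.Edge' w h (x n) (x (n + 1))) (n : ℕ) : A.InDag'' w h (x n) := by
  refine ⟨(hx n).1.1, fun hfin => Set.infinite_of_injective_forall_mem (f := fun d => x (n + d))
    (fun d₁ d₂ hd => ?_) (fun d => ?_) hfin⟩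
  · have := congrArg Prod.snd hd
    simp only [hlev] at this
    omega
  · induction d with
    | zero => exact .refl
    | succ d ih => exact ih.tail (hx (n + d))

def FrequentlyAcc'' (A : NBW Q σ) (w : ℕ → σ) (h : Q × ℕ → List Bool) : Prop :=
  ∃ᶠ n in atTop, ∃ v, A.InDag'' w h v ∧ v.2 = n ∧ A.acc v.1 = true

def retroLabel (h : Q × ℕ → List Bool) (k : ℕ) (v : Q × ℕ) : Bool :=
  decide (true ∉ (h v).drop (k + 1))

theorem IsProfileFun.isRetroLabeling_retroLabel (hprof : A.IsProfileFun w h) (k : ℕ) :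
    A.IsRetroLabeling w h k (retroLabel h k) := by
  refine ⟨fun u hu hk => ?_, fun u hu hk hacc => ?_, fun u v hk hacc he => ?_⟩
  · have hlen : (h u).length ≤ k + 1 := by rw [hprof.length_eq_s12 hu]; omega
    simp [retroLabel, List.drop_eq_nil_of_le hlen]
  · simp only [retroLabel, decide_eq_false_iff_not, not_not, List.mem_iff_getElem?,
      List.getElem?_drop]
    exact ⟨u.2 - (k + 1), by rw [Nat.add_sub_cancel' hk, hprof.getElem?_eq hu, hacc]⟩
  · have hlen : k + 1 ≤ (h u).length := by
      rw [hprof.length_eq_s12 he.1.1]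
      have := he.1.2.1
      omega
    simp [retroLabel, hprof.eq_concat_of_edge' he, hacc, List.drop_append_of_le_length hlen]

theorem IsRetroLabeling.acc_eq_false_of_legal {k : ℕ} {lam : Q × ℕ → Bool}
    (hlam : A.IsRetroLabeling w h k lam) (hleg : A.Legal w h lam) {v : Q × ℕ}
    (hv : A.InDag'' w h v) (hk : k < v.2) : A.acc v.1 = false := by
  by_contra hacc
  exact hv.2 (hleg v hv.1 (hlam.2.1 v hv.1 hk (by simpa using hacc)))

theorem IsProfileFun.legal_retroLabel [Finite Q] (hprof : A.IsProfileFun w h) {k : ℕ}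
    (hk : ∀ v, A.InDag'' w h v → k < v.2 → A.acc v.1 = false) :
    A.Legal w h (retroLabel h k) := by
  intro u hu hlab
  by_contra hinf
  simp only [retroLabel, decide_eq_false_iff_not, not_not, List.mem_iff_getElem?,
    List.getElem?_drop] at hlab
  obtain ⟨i, hi⟩ := hlab
  have hiu : k + 1 + i ≤ u.2 := by
    have := (List.getElem?_eq_some_iff.mp hi).1
    rw [hprof.length_eq_s12 hu] at this
    omega
  obtain ⟨a, ha, hai, hau, hha⟩ := hprof.exists_ancestor hu hiu
  have hacc : A.acc a.1 = true := by
    have := hprof.getElem?_eq ha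
    rwa [hha, hai, List.getElem?_take_of_lt (by omega), hi, Option.some_inj, eq_comm] at this
  simp [hk a (InDag''.of_reflTransGen ha hau ⟨hu, hinf⟩) (by omega)] at hacc

def OnAcceptingRun (A : NBW Q σ) (w : ℕ → σ) (v : Q × ℕ) : Prop :=
  ∃ r, A.IsAcceptingRun w r ∧ r v.2 = v.1

theorem OnAcceptingRun.inDag {v : Q × ℕ} (hv : A.OnAcceptingRun w v) : A.InDag w v := by
  obtain ⟨r, hr, hrv⟩ := hv
  simpa [hrv] using hr.1.inDag v.2

theorem OnAcceptingRun.of_edge {u v : Q × ℕ} (he : A.Edge w u v) (hv : A.OnAcceptingRun w v) :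
    A.OnAcceptingRun w u := by
  obtain ⟨r, ⟨⟨-, hrt⟩, hracc⟩, hrv⟩ := hv
  obtain ⟨p, hp0, hpt, hpu⟩ := he.1
  refine ⟨fun j => if j ≤ u.2 then p j else r j, ⟨⟨by simpa using hp0, fun j => ?_⟩, ?_⟩,
    by simp [hpu]⟩
  · rcases lt_trichotomy j u.2 with hj | rfl | hj
    · simpa [hj.le, Nat.succ_le_of_lt hj] using hpt j hj
    · have hlev : u.2 + 1 = v.2 := he.2.1.symm
      simp only [le_refl, if_true, hpu, hlev, show ¬ v.2 ≤ u.2 by omega, if_false, hrv]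
      exact he.2.2
    · simpa [hj.not_ge, show ¬ j + 1 ≤ u.2 by omega] using hrt j
  · refine hracc.mp ((eventually_gt_atTop u.2).mono fun j hj hacc => ?_)
    simpa [hj.not_ge] using hacc

def MaxOnAcceptingRun (A : NBW Q σ) (w : ℕ → σ) (h : Q × ℕ → List Bool) (v : Q × ℕ) : Prop :=
  A.OnAcceptingRun w v ∧ ∀ v', A.OnAcceptingRun w v' → v'.2 = v.2 → h v' ≤ h v

theorem IsProfileFun.exists_edge'_path_of_isAcceptingRun [Finite Q] (hprof : A.IsProfileFun w h)
    {ρ : ℕ → Q} (hρ : A.IsAcceptingRun w ρ) :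
    ∃ x : ℕ → Q × ℕ, (∀ n, (x n).2 = n ∧ A.MaxOnAcceptingRun w h (x n)) ∧
      ∀ n, A.Edge' w h (x n) (x (n + 1)) := by
  refine exists_seq_of_forall_mem_exists_pred (fun n => {v | v.2 = n ∧ A.MaxOnAcceptingRun w h v})
    (A.Edge' w h) (fun n => (finite_level n).subset fun _ => And.left) (fun n => ?_)
    (fun n v ⟨hvn, hv, hvmax⟩ => ?_)
  · obtain ⟨v, ⟨hv, hvn⟩, hmax⟩ := Set.exists_max_image {v | A.OnAcceptingRun w v ∧ v.2 = n} h
      ((finite_level n).subset fun _ hv => hv.2) ⟨(ρ n, n), ⟨ρ, hρ, rfl⟩, rfl⟩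
    exact ⟨v, hvn, hv, fun v' hv' hv'n => hmax v' ⟨hv', hv'n.trans hvn⟩⟩
  obtain ⟨u, hu⟩ := exists_edge'_of_inDag (h := h) hv.inDag (by omega)
  have hun : u.2 = n := by have := hu.1.2.1; omega
  refine ⟨u, ⟨hun, hv.of_edge hu.1, fun u' hu' hu'u => not_lt.mp fun hlt => ?_⟩, hu⟩
  obtain ⟨r, hr, hru'⟩ := hu'
  obtain rfl : u' = (r n, n) := Prod.ext (by rw [← hru', hu'u, hun]) (hu'u.trans hun)
  refine (hvmax (r (n + 1), n + 1) ⟨r, hr, rfl⟩ hvn.symm).not_gt ?_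
  calc h v = h u ++ [A.acc v.1] := hprof.eq_concat_of_edge' hu
    _ < h (r n, n) ++ [A.acc (r (n + 1))] := by
        refine List.append_lt_append_of_lt ?_ hlt _ _
        rw [hprof.length_eq_s12 hu.1.1, hprof.length_eq_s12 (hr.1.inDag n), hun]
    _ ≤ h (r (n + 1), n + 1) := hprof.concat_le_of_edge (hr.1.edge n)

theorem IsProfileFun.frequently_acc_of_maxOnAcceptingRun (hprof : A.IsProfileFun w h)
    {x : ℕ → Q × ℕ} (hx : ∀ n, (x n).2 = n ∧ A.MaxOnAcceptingRun w h (x n))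
    (hE : ∀ n, A.Edge' w h (x n) (x (n + 1))) : ∃ᶠ n in atTop, A.acc (x n).1 = true := by
  by_contra hfin
  obtain ⟨N, hN⟩ := eventually_atTop.mp (not_frequently.mp hfin)
  obtain ⟨r, ⟨hr, hracc⟩, hrN⟩ := (hx N).2.1
  rw [(hx N).1] at hrN
  have hlen (n : ℕ) : (h (x n)).length = (h (r n, n)).length := by
    rw [hprof.length_eq_s12 (hE n).1.1, hprof.length_eq_s12 (hr.inDag n), (hx n).1]
  have hxstep (n : ℕ) (hn : N ≤ n) : h (x (n + 1)) = h (x n) ++ [false] := by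
    rw [hprof.eq_concat_of_edge' (hE n), eq_false_of_ne_true (hN (n + 1) (by omega))]
  have hle : ∀ n, N ≤ n → h (x n) ≤ h (r n, n) := by
    intro n hn
    induction n, hn using Nat.le_induction with
    | base => rw [show x N = (r N, N) from Prod.ext hrN.symm (hx N).1]
    | succ n hn ih =>
      calc h (x (n + 1)) = h (x n) ++ [false] := hxstep n hn
        _ ≤ h (r n, n) ++ [A.acc (r (n + 1))] :=
            List.concat_le_concat (hlen n) ih (Bool.false_le _)
        _ ≤ h (r (n + 1), n + 1) := hprof.concat_le_of_edge (hr.edge n)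
  obtain ⟨n, hn, hacc⟩ := frequently_atTop.mp hracc (N + 1)
  obtain ⟨m, rfl⟩ : ∃ m, n = m + 1 := ⟨n - 1, by omega⟩
  refine ((hx (m + 1)).2.2 (r (m + 1), m + 1) ⟨r, ⟨hr, hracc⟩, rfl⟩ (hx (m + 1)).1.symm).not_gt ?_
  calc h (x (m + 1)) = h (x m) ++ [false] := hxstep m (by omega)
    _ < h (r m, m) ++ [A.acc (r (m + 1))] :=
        List.concat_lt_concat (hlen m) (hle m (by omega)) (by rw [hacc]; exact Bool.false_lt_true)
    _ ≤ h (r (m + 1), m + 1) := hprof.concat_le_of_edge (hr.edge m)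

theorem IsProfileFun.frequentlyAcc''_of_isAcceptingRun [Finite Q] (hprof : A.IsProfileFun w h)
    {ρ : ℕ → Q} (hρ : A.IsAcceptingRun w ρ) : A.FrequentlyAcc'' w h := by
  obtain ⟨x, hx, hE⟩ := hprof.exists_edge'_path_of_isAcceptingRun hρ
  have hlev (n : ℕ) : (x n).2 = n := (hx n).1
  exact (hprof.frequently_acc_of_maxOnAcceptingRun hx hE).mono fun n hn =>
    ⟨x n, inDag''_of_forall_edge' hlev hE n, hlev n, hn⟩

def profiles'' (A : NBW Q σ) (w : ℕ → σ) (h : Q × ℕ → List Bool) (n : ℕ) : Set (List Bool) :=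
  (fun q => h (q, n)) '' {q | A.InDag'' w h (q, n)}

theorem mem_profiles''_iff {n : ℕ} {s : List Bool} :
    s ∈ A.profiles'' w h n ↔ ∃ v, A.InDag'' w h v ∧ v.2 = n ∧ h v = s :=
  ⟨fun ⟨q, hq, hqs⟩ => ⟨(q, n), hq, rfl, hqs⟩,
    fun ⟨v, hv, hvn, hvs⟩ => ⟨v.1, by simpa [← hvn], by simpa [← hvn]⟩⟩

theorem ncard_profiles''_le [Finite Q] (n : ℕ) : (A.profiles'' w h n).ncard ≤ Nat.card Q :=
  (Set.ncard_image_le (Set.toFinite _)).trans (Set.ncard_le_card _)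

theorem finite_profiles'' [Finite Q] (n : ℕ) : (A.profiles'' w h n).Finite :=
  (Set.toFinite _).image _

theorem IsProfileFun.length_of_mem_profiles'' (hprof : A.IsProfileFun w h) {n : ℕ}
    {s : List Bool} (hs : s ∈ A.profiles'' w h n) : s.length = n + 1 := by
  obtain ⟨q, hq, rfl⟩ := hs
  exact hprof.length_eq_s12 hq.1

theorem IsProfileFun.take_mem_profiles'' [Finite Q] (hprof : A.IsProfileFun w h) {v : Q × ℕ}
    (hv : A.InDag'' w h v) {i : ℕ} (hi : i ≤ v.2) : (h v).take (i + 1) ∈ A.profiles'' w h i := by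
  obtain ⟨u, hu, hui, huv, hhu⟩ := hprof.exists_ancestor hv.1 hi
  exact mem_profiles''_iff.mpr ⟨u, InDag''.of_reflTransGen hu huv hv, hui, hhu⟩

theorem IsProfileFun.dropLast_image_profiles'' [Finite Q] (hprof : A.IsProfileFun w h) (n : ℕ) :
    List.dropLast '' A.profiles'' w h (n + 1) = A.profiles'' w h n := by
  ext s
  simp only [Set.mem_image, mem_profiles''_iff]
  constructor
  · rintro ⟨_, ⟨v, hv, hvn, rfl⟩, rfl⟩
    obtain ⟨u, hu⟩ := exists_edge'_of_inDag (h := h) hv.1 (by omega)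
    refine ⟨u, InDag''.of_reflTransGen hu.1.1 (.single hu) hv, by have := hu.1.2.1; omega, ?_⟩
    rw [hprof.eq_concat_of_edge' hu, List.dropLast_concat]
  · rintro ⟨u, hu, hun, rfl⟩
    obtain ⟨v, huv, hv⟩ := hu.exists_edge'
    refine ⟨h v, ⟨v, hv, by rw [huv.1.2.1, hun], rfl⟩, ?_⟩
    rw [hprof.eq_concat_of_edge' huv, List.dropLast_concat]

theorem IsProfileFun.exists_edge'_path_of_take_eq [Finite Q] (hprof : A.IsProfileFun w h)
    {L : ℕ} {t : List Bool}
    (ht : ∀ N, ∃ v, A.InDag'' w h v ∧ N ≤ v.2 ∧ (h v).take (L + 1) = t) :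
    ∃ x : ℕ → Q × ℕ, (∀ n, A.InDag'' w h (x n) ∧ (x n).2 = n ∧ (h (x n)).take (L + 1) <+: t) ∧
      ∀ n, A.Edge' w h (x n) (x (n + 1)) := by
  refine exists_seq_of_forall_mem_exists_pred
    (fun n => {v | A.InDag'' w h v ∧ v.2 = n ∧ (h v).take (L + 1) <+: t}) (A.Edge' w h)
    (fun n => (finite_level n).subset fun _ hv => hv.2.1) (fun n => ?_)
    (fun n v ⟨hv, hvn, hvt⟩ => ?_)
  · obtain ⟨v, hv, hnv, hvt⟩ := ht n
    obtain ⟨u, hu, hun, huv, hhu⟩ := hprof.exists_ancestor hv.1 hnv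
    refine ⟨u, InDag''.of_reflTransGen hu huv hv, hun, ?_⟩
    rw [hhu, ← hvt]
    exact (List.take_prefix _ _).take _
  · obtain ⟨u, hu⟩ := exists_edge'_of_inDag (h := h) hv.1 (by omega)
    have hun : u.2 = n := by have := hu.1.2.1; omega
    refine ⟨u, ⟨InDag''.of_reflTransGen hu.1.1 (.single hu) hv, hun, ?_⟩, hu⟩
    refine List.IsPrefix.trans ?_ hvt
    rw [hprof.eq_concat_of_edge' hu]
    exact (List.prefix_append _ _).take _

theorem IsProfileFun.exists_isAcceptingRun_of_frequentlyAcc'' [Finite Q]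
    (hprof : A.IsProfileFun w h) (hF : A.FrequentlyAcc'' w h) : ∃ r, A.IsAcceptingRun w r := by
  obtain ⟨L, hinj⟩ := exists_forall_injOn_of_image_eq hprof.dropLast_image_profiles''
    finite_profiles'' ncard_profiles''_le
  obtain ⟨t, ht, hFt⟩ : ∃ t ∈ A.profiles'' w h L, ∃ᶠ n in atTop,
      ∃ v, A.InDag'' w h v ∧ v.2 = n ∧ A.acc v.1 = true ∧ (h v).take (L + 1) = t := by
    refine (finite_profiles'' L).frequently_exists.mp <|
      (hF.and_eventually (eventually_ge_atTop L)).mono fun n ⟨⟨v, hv, hvn, hacc⟩, hn⟩ =>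
        ⟨_, hprof.take_mem_profiles'' hv (hvn ▸ hn), v, hv, hvn, hacc, rfl⟩
  obtain ⟨x, hx, hE⟩ := hprof.exists_edge'_path_of_take_eq fun N =>
    have ⟨n, hn, v, hv, hvn, _, hvt⟩ := frequently_atTop.mp hFt N
    ⟨v, hv, hvn ▸ hn, hvt⟩
  have hlev (n : ℕ) : (x n).2 = n := (hx n).2.1
  refine ⟨_, isRun_of_edge hlev fun n => (hE n).1, ?_⟩
  refine (hFt.and_eventually (eventually_ge_atTop L)).mono
    fun n ⟨⟨v, hv, hvn, hacc, hvt⟩, hn⟩ => ?_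
  have hxt : (h (x n)).take (L + 1) = t := by
    refine (hx n).2.2.eq_of_length ?_
    rw [hprof.length_of_mem_profiles'' ht, List.length_take, hprof.length_eq_s12 (hx n).1.1, hlev n]
    omega
  have hxv : h (x n) = h v :=
    List.eq_of_take_eq_of_injOn_dropLast (fun _ _ => hprof.length_of_mem_profiles'')
      hprof.dropLast_image_profiles'' hinj hn (mem_profiles''_iff.mpr ⟨x n, (hx n).1, hlev n, rfl⟩)
      (mem_profiles''_iff.mpr ⟨v, hv, hvn, rfl⟩) (hxt.trans hvt.symm)
  subst hvn
  have := hprof.getElem?_eq (hx v.2).1.1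
  rwa [hxv, hlev, hprof.getElem?_eq hv.1, Option.some_inj, hacc, eq_comm] at this

theorem IsProfileFun.exists_isAcceptingRun_iff_frequentlyAcc'' [Finite Q]
    (hprof : A.IsProfileFun w h) : (∃ r, A.IsAcceptingRun w r) ↔ A.FrequentlyAcc'' w h :=
  ⟨fun ⟨_, hρ⟩ => hprof.frequentlyAcc''_of_isAcceptingRun hρ,
    hprof.exists_isAcceptingRun_of_frequentlyAcc''⟩

theorem IsProfileFun.exists_legal_iff_not_frequentlyAcc'' [Finite Q]
    (hprof : A.IsProfileFun w h) :
    (∃ (k : ℕ) (lam : Q × ℕ → Bool), A.IsRetroLabeling w h k lam ∧ A.Legal w h lam) ↔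
      ¬ A.FrequentlyAcc'' w h := by
  rw [FrequentlyAcc'', not_frequently, eventually_atTop]
  constructor
  · rintro ⟨k, lam, hlam, hleg⟩
    exact ⟨k + 1, fun n hn ⟨v, hv, hvn, hacc⟩ => by
      simp [hlam.acc_eq_false_of_legal hleg hv (by omega)] at hacc⟩
  · rintro ⟨k, hk⟩
    exact ⟨k, retroLabel h k, hprof.isRetroLabeling_retroLabel k, hprof.legal_retroLabel
      fun v hv hkv => eq_false_of_ne_true fun hacc => hk v.2 hkv.le ⟨v, hv, rfl, hacc⟩⟩

end NBW

/-- `G` is rejecting iff for some `k` the labeling `λ^k` is legal. -/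
theorem stmt12 {Q σ : Type} [Finite Q] (A : NBW Q σ) (w : ℕ → σ) (h : Q × ℕ → List Bool)
    (hprof : A.IsProfileFun w h) :
    (¬ ∃ π : ℕ → Q × ℕ, A.AcceptingPath (A.Edge w) π) ↔
    (∃ (k : ℕ) (lam : Q × ℕ → Bool),
      A.IsRetroLabeling w h k lam ∧ A.Legal w h lam) := by
  rw [NBW.exists_acceptingPath_iff_exists_isAcceptingRun,
    hprof.exists_isAcceptingRun_iff_frequentlyAcc'', hprof.exists_legal_iff_not_frequentlyAcc'']
end
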